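/- arXiv:1005.1369 — 2 statements merged into one kernel-verified Lean document; each statement's English description precedes it below -/
import Mathlib

section
/- Let 2 ≤ d ≤ (k+1)/2, let G_1 be the complete graph on Σ_k minus a clique on Σ_d, and let G_2 = complement of G_1, i.e. the graph on Σ_k whose edges are exactly the pairs {a,b} with a, b ∈ Σ_d. Then for every α ∈ [0,1] the rate vector (α·log₂ d, (1−α)·log₂(k−d+1)) is optimal; in particular it is feasible, and every feasible rate vector (R_1, R_2) with R_1 ≥ α·log₂ d satisfies R_2 ≤ (1−α)·log₂(k−d+1). -/
/-- Two strings of length `n` over the alphabet are distinguishable for a user with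
confusion graph `G` if they differ at some coordinate at two non-adjacent letters. -/
def Distinguishable {V : Type*} (G : SimpleGraph V) {n : ℕ} (x y : Fin n → V) : Prop :=
  ∃ t : Fin n, x t ≠ y t ∧ ¬ G.Adj (x t) (y t)

/-- `alphaN G n` is the largest size of a family of strings in `V^n` that are pairwise
distinguishable (the independence number of the `n`-fold strong product of `G`). -/
noncomputable def alphaN {V : Type*} [Fintype V] (G : SimpleGraph V) (n : ℕ) : ℕ :=
  sSup {N : ℕ | ∃ S : Finset (Fin n → V), S.card = N ∧
    ∀ x ∈ S, ∀ y ∈ S, x ≠ y → Distinguishable G x y}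

/-- The Shannon capacity of a confusion graph: `c(G) = sup_{n ≥ 1} α_n(G)^{1/n}`. -/
noncomputable def shannonCapacity {V : Type*} [Fintype V] (G : SimpleGraph V) : ℝ :=
  ⨆ n : ℕ, (alphaN G (n + 1) : ℝ) ^ (((n : ℝ) + 1))⁻¹

/-- `(m 1, …, m r)` is feasible at length `n` for the confusion graphs `G i` if there is an
encoding map `E` such that any two message tuples differing in the `i`-th component get codewords
that are distinguishable for user `i` (so user `i` can decode his own message). -/
def FeasibleAtLength {k r : ℕ} (G : Fin r → SimpleGraph (Fin k)) (m : Fin r → ℕ) (n : ℕ) :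
    Prop :=
  ∃ E : (∀ i : Fin r, Fin (m i)) → (Fin n → Fin k),
    ∀ i : Fin r, ∀ a b : (∀ i : Fin r, Fin (m i)), a i ≠ b i →
      ∃ t : Fin n, E a t ≠ E b t ∧ ¬ (G i).Adj (E a t) (E b t)

/-- A rate vector `R` of nonnegative reals is feasible if there are positive integers `m n i`
with `(m n 1, …, m n r)` feasible at length `n` for every `n` and `log₂ (m n i) / n → R i`. -/
def FeasibleRate {k r : ℕ} (G : Fin r → SimpleGraph (Fin k)) (R : Fin r → ℝ) : Prop :=
  (∀ i, 0 ≤ R i) ∧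
  ∃ m : ℕ → Fin r → ℕ,
    (∀ n i, 0 < m n i) ∧
    (∀ n : ℕ, FeasibleAtLength G (m n) n) ∧
    ∀ i, Filter.Tendsto (fun n : ℕ => Real.logb 2 (m n i) / n) Filter.atTop (nhds (R i))

/-- A feasible rate vector for two users is optimal if no user can increase his rate while
the other maintains the same rate. -/
def OptimalRate {k : ℕ} (G : Fin 2 → SimpleGraph (Fin k)) (R : Fin 2 → ℝ) : Prop :=
  FeasibleRate G R ∧
  (¬ ∃ R1' : ℝ, R 0 < R1' ∧ FeasibleRate G ![R1', R 1]) ∧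
  (¬ ∃ R2' : ℝ, R 1 < R2' ∧ FeasibleRate G ![R 0, R2'])

/-!
Achievability is time sharing: a fraction `α` of the coordinates carries words over `Σ_d`,
which user 1 reads exactly, the rest words over `σ_d` and the `k - d` letters outside `Σ_d`,
which user 2 reads exactly.

For the converse let `γ = log_{k-d+1} d ∈ (0, 1]`; every code of length `n` satisfies
`m₁ · m₂ ^ γ ≤ d ^ n`, that is `R₁ / log d + R₂ / log (k - d + 1) ≤ 1`. Fill the positions
of a codeword that carry letters outside `Σ_d` with arbitrary letters of `Σ_d`. User 1's condition
makes the resulting sets of words in `Σ_dⁿ` disjoint for different first messages, while user 2's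
condition makes the pattern of letters outside `Σ_d` injective in the second message. A family
`P` of such patterns fills at least `|P| ^ γ` words of `Σ_dⁿ`: this goes by induction on `n`,
splitting on the first coordinate, and the concavity of `x ↦ x ^ γ` enters through
`((W + 1) A + ∑_c B_c) ^ γ ≤ ∑_c (A + B_c) ^ γ` for `W = k - d` and `(W + 1) ^ γ ≤ d`.
-/

open Finset Filter Topology

theorem ConcaveOn.map_add_sub_map_le {s : Set ℝ} {f : ℝ → ℝ} (hf : ConcaveOn ℝ s f)
    {a b t : ℝ} (ha : a ∈ s) (hbt : b + t ∈ s) (hab : a ≤ b) (ht : 0 ≤ t) :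
    f (b + t) - f b ≤ f (a + t) - f a := by
  rcases (add_nonneg (sub_nonneg.2 hab) ht).eq_or_lt with h | h
  · obtain rfl : a = b := by linarith
    obtain rfl : t = 0 := by linarith
    simp
  -- `a + t` and `b` are the convex combinations of `a` and `b + t` with swapped weights
  set u := (b - a) / (b - a + t)
  set v := t / (b - a + t)
  have huv : u + v = 1 := by rw [← add_div]; exact div_self h.ne'
  have h₁ := hf.2 ha hbt (by positivity) (by positivity) huv
  have h₂ := hf.2 ha hbt (by positivity) (by positivity) ((add_comm v u).trans huv)
  have e₁ : u • a + v • (b + t) = a + t := by simp only [smul_eq_mul, u, v]; field_simp; ring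
  have e₂ : v • a + u • (b + t) = b := by simp only [smul_eq_mul, u, v]; field_simp; ring
  rw [e₁] at h₁
  rw [e₂] at h₂
  simp only [smul_eq_mul] at h₁ h₂
  linear_combination h₁ + h₂ - (f a + f (b + t)) * huv

theorem rpow_mul_add_sum_le_sum_rpow {ι : Type*} [Fintype ι] {γ K A : ℝ} (hγ₀ : 0 < γ)
    (hγ₁ : γ ≤ 1) (hK : 1 ≤ K) (hKι : K ^ γ ≤ Fintype.card ι) (hA : 0 ≤ A)
    {B : ι → ℝ} (hB : ∀ i, 0 ≤ B i) :
    (K * A + ∑ i, B i) ^ γ ≤ ∑ i, (A + B i) ^ γ := by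
  classical
  have hconc := Real.concaveOn_rpow hγ₀.le hγ₁
  have telescope : ∀ s : Finset ι,
      (K * A + ∑ i ∈ s, B i) ^ γ ≤
        (K * A) ^ γ + ∑ i ∈ s, ((A + B i) ^ γ - A ^ γ) := by
    intro s
    induction s using Finset.induction_on with
    | empty => simp
    | insert j s hj ih =>
      have hX : A ≤ K * A + ∑ i ∈ s, B i := by
        nlinarith [Finset.sum_nonneg fun i (_ : i ∈ s) => hB i]
      have := hconc.map_add_sub_map_le hA (by simp only [Set.mem_Ici]; linarith [hB j]) hX (hB j)
      rw [sum_insert hj, sum_insert hj, add_comm (B j), ← add_assoc]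
      linarith
  have hAγ : (K * A) ^ γ ≤ Fintype.card ι * A ^ γ := by
    rw [Real.mul_rpow (by linarith) hA]
    exact mul_le_mul_of_nonneg_right hKι (by positivity)
  have := telescope univ
  rw [sum_sub_distrib, sum_const, card_univ, nsmul_eq_mul] at this
  linarith

section Cylinder

variable {L H : Type*} {n : ℕ}

/-- Words over `L ⊕ H` are encoded by a pattern `p`, which keeps the letters from `H` and has
`none` where the word has a letter from `L`, and a filling `f` of those positions. -/
def cylinder (p : Fin n → Option H) (f : Fin n → L) : Set (Fin n → L) :=
  {w | ∀ t, p t = none → w t = f t}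

theorem mem_cylinder_self (p : Fin n → Option H) (f : Fin n → L) : f ∈ cylinder p f :=
  fun _ _ => rfl

theorem cons_mem_cylinder_cons {o : Option H} {q : Fin n → Option H} {f : Fin (n + 1) → L}
    {c : L} {v : Fin n → L} (hv : v ∈ cylinder q (Fin.tail f)) (hc : o = none → c = f 0) :
    Fin.cons c v ∈ cylinder (Fin.cons o q) f := by
  intro t
  cases t using Fin.cases with
  | zero => simpa using hc
  | succ t => simpa [Fin.tail] using hv t

def headSlice [DecidableEq L] (U : Finset (Fin (n + 1) → L)) (c : L) : Finset (Fin n → L) :=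
  (U.filter (· 0 = c)).image Fin.tail

theorem sum_card_headSlice_le [Fintype L] [DecidableEq L] (U : Finset (Fin (n + 1) → L)) :
    ∑ c, #(headSlice U c) ≤ #U := by
  rw [card_eq_sum_card_fiberwise (f := (· 0)) (t := univ) fun _ _ => mem_univ _]
  exact sum_le_sum fun c _ => card_image_le

theorem exists_cylinder_subset_headSlice [DecidableEq L] {U : Finset (Fin (n + 1) → L)}
    {o : Option H} {q : Fin n → Option H} {c : L}
    (h : ∃ f : Fin (n + 1) → L, cylinder (Fin.cons o q) f ⊆ U ∧ (o = none → c = f 0)) :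
    ∃ g : Fin n → L, cylinder q g ⊆ headSlice U c := by
  obtain ⟨f, hf, hc⟩ := h
  refine ⟨Fin.tail f, fun v hv => mem_image.2 ⟨Fin.cons c v, ?_, Fin.tail_cons _ _⟩⟩
  exact mem_filter.2 ⟨hf (cons_mem_cylinder_cons hv hc), Fin.cons_zero _ _⟩

theorem card_le_card_add_card_mul_of_cons_mem [Fintype H] [DecidableEq H]
    {P : Finset (Fin (n + 1) → Option H)} {N M : Finset (Fin n → Option H)}
    (hN : ∀ q, Fin.cons none q ∈ P → q ∈ N)
    (hM : ∀ h q, Fin.cons (some h) q ∈ P → q ∈ M) :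
    #P ≤ #N + Fintype.card H * #M := by
  calc #P ≤ #(N.image (fun q => (Fin.cons none q : Fin (n + 1) → Option H)) ∪
        (univ ×ˢ M).image fun x => (Fin.cons (some x.1) x.2 : Fin (n + 1) → Option H)) := by
        refine card_le_card fun p hp => ?_
        rw [← Fin.cons_self_tail p] at hp ⊢
        cases h : p 0 with
        | none => rw [h] at hp; simp [hN _ hp]
        | some x => rw [h] at hp; simp [hM _ _ hp]
    _ ≤ #N + Fintype.card H * #M := by
        grw [card_union_le, card_image_le, card_image_le, card_product, card_univ]

variable [Fintype L] [Fintype H]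

theorem card_rpow_le_card_succ_of_cylinder_subset {γ : ℝ} (hγ₀ : 0 < γ) (hγ₁ : γ ≤ 1)
    (hγ : ((Fintype.card H : ℝ) + 1) ^ γ ≤ Fintype.card L)
    (ih : ∀ (P : Finset (Fin n → Option H)) (U : Finset (Fin n → L)),
      (∀ p ∈ P, ∃ f : Fin n → L, cylinder p f ⊆ U) → (#P : ℝ) ^ γ ≤ #U)
    (P : Finset (Fin (n + 1) → Option H)) (U : Finset (Fin (n + 1) → L))
    (hPU : ∀ p ∈ P, ∃ f : Fin (n + 1) → L, cylinder p f ⊆ U) :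
    (#P : ℝ) ^ γ ≤ #U := by
  classical
  -- A pattern starting with `some h` fits into every slice `headSlice U c`, one starting with
  -- `none` only into the slice of the letter its filling puts there; `M` and `D c` hold the tails.
  set M := univ.filter fun q => ∃ h, Fin.cons (some h) q ∈ P
  set N := univ.filter fun q => Fin.cons none q ∈ P
  set D : L → Finset (Fin n → Option H) := fun c =>
    (N \ M).filter fun q =>
      ∃ f : Fin (n + 1) → L, cylinder (Fin.cons none q) f ⊆ U ∧ f 0 = c
  have hP : #P ≤ (Fintype.card H + 1) * #M + ∑ c, #(D c) := by
    have hPNM := card_le_card_add_card_mul_of_cons_mem (P := P) (N := N) (M := M)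
      (fun q hq => by simpa [N] using hq) (fun h q hq => by simpa [M] using ⟨h, hq⟩)
    have hNM : #(N \ M) ≤ ∑ c, #(D c) := by
      refine (card_le_card fun q hq => ?_).trans card_biUnion_le
      obtain ⟨f, hf⟩ := hPU _ (by simpa [N] using (mem_sdiff.1 hq).1)
      exact mem_biUnion.2 ⟨f 0, mem_univ _, mem_filter.2 ⟨hq, f, hf, rfl⟩⟩
    linarith [card_le_card_sdiff_add_card (s := N) (t := M)]
  have hslice : ∀ c, ((#M : ℝ) + #(D c)) ^ γ ≤ #(headSlice U c) := by
    intro c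
    have hdisj : Disjoint M (D c) :=
      disjoint_left.2 fun q hM hD => (mem_sdiff.1 (mem_filter.1 hD).1).2 hM
    have hQ : ∀ q ∈ M ∪ D c, ∃ g : Fin n → L, cylinder q g ⊆ headSlice U c := by
      intro q hq
      rcases mem_union.1 hq with hq | hq
      · obtain ⟨h, hp⟩ := (mem_filter.1 hq).2
        obtain ⟨f, hf⟩ := hPU _ hp
        exact exists_cylinder_subset_headSlice ⟨f, hf, nofun⟩
      · obtain ⟨f, hf, rfl⟩ := (mem_filter.1 hq).2
        exact exists_cylinder_subset_headSlice ⟨f, hf, fun _ => rfl⟩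
    simpa [card_union_of_disjoint hdisj] using ih _ _ hQ
  calc (#P : ℝ) ^ γ ≤ (((Fintype.card H : ℝ) + 1) * #M + ∑ c, (#(D c) : ℝ)) ^ γ := by
        gcongr
        exact_mod_cast hP
    _ ≤ ∑ c, ((#M : ℝ) + #(D c)) ^ γ :=
        rpow_mul_add_sum_le_sum_rpow hγ₀ hγ₁ (by simp) hγ (by positivity)
          fun _ => by positivity
    _ ≤ ∑ c, (#(headSlice U c) : ℝ) := sum_le_sum fun c _ => hslice c
    _ ≤ #U := by exact_mod_cast sum_card_headSlice_le U

theorem card_rpow_le_card_of_cylinder_subset {γ : ℝ} (hγ₀ : 0 < γ) (hγ₁ : γ ≤ 1)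
    (hγ : ((Fintype.card H : ℝ) + 1) ^ γ ≤ Fintype.card L) :
    ∀ {n : ℕ} (P : Finset (Fin n → Option H)) (U : Finset (Fin n → L)),
      (∀ p ∈ P, ∃ f : Fin n → L, cylinder p f ⊆ U) → (#P : ℝ) ^ γ ≤ #U
  | 0, P, U, hPU => by
    rcases P.eq_empty_or_nonempty with rfl | ⟨p, hp⟩
    · simp [Real.zero_rpow hγ₀.ne']
    obtain ⟨f, hf⟩ := hPU p hp
    have hP : #P ≤ 1 := (card_le_univ P).trans (by simp)
    have hU : 1 ≤ #U := card_pos.2 ⟨f, hf (mem_cylinder_self p f)⟩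
    calc (#P : ℝ) ^ γ ≤ 1 := Real.rpow_le_one (by positivity) (by exact_mod_cast hP) hγ₀.le
      _ ≤ #U := by exact_mod_cast hU
  | _ + 1, P, U, hPU => card_rpow_le_card_succ_of_cylinder_subset hγ₀ hγ₁ hγ
      (fun P U => card_rpow_le_card_of_cylinder_subset hγ₀ hγ₁ hγ P U) P U hPU

end Cylinder

theorem feasibleAtLength_pow_add {k D K : ℕ} {G : Fin 2 → SimpleGraph (Fin k)}
    (u : Fin D → Fin k) (hu : ∀ i j, i ≠ j → u i ≠ u j ∧ ¬ (G 0).Adj (u i) (u j))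
    (v : Fin K → Fin k) (hv : ∀ i j, i ≠ j → v i ≠ v j ∧ ¬ (G 1).Adj (v i) (v j))
    (s t : ℕ) :
    FeasibleAtLength G ![D ^ s, K ^ t] (s + t) := by
  refine ⟨fun a => Fin.append (u ∘ finFunctionFinEquiv.symm (a 0))
    (v ∘ finFunctionFinEquiv.symm (a 1)),
    Fin.forall_fin_two.2 ⟨fun a b hab => ?_, fun a b hab => ?_⟩⟩
  · obtain ⟨i, hi⟩ := Function.ne_iff.1 (finFunctionFinEquiv.symm.injective.ne hab)
    exact ⟨Fin.castAdd t i, by simpa [Fin.append_left] using hu _ _ hi⟩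
  · obtain ⟨i, hi⟩ := Function.ne_iff.1 (finFunctionFinEquiv.symm.injective.ne hab)
    exact ⟨Fin.natAdd s i, by simpa [Fin.append_right] using hv _ _ hi⟩

theorem tendsto_logb_pow_div {s : ℕ → ℕ} {β : ℝ}
    (hs : Tendsto (fun n => (s n : ℝ) / n) atTop (𝓝 β)) (D : ℕ) :
    Tendsto (fun n : ℕ => Real.logb 2 ((D ^ s n : ℕ) : ℝ) / n) atTop
      (𝓝 (β * Real.logb 2 D)) := by
  refine (hs.mul_const _).congr fun n => ?_
  rw [Nat.cast_pow, Real.logb_pow]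
  ring

theorem tendsto_floor_mul_div {α : ℝ} (hα : 0 ≤ α) :
    Tendsto (fun n : ℕ => (⌊α * n⌋₊ : ℝ) / n) atTop (𝓝 α) :=
  (tendsto_nat_floor_mul_div_atTop hα).comp tendsto_natCast_atTop_atTop

theorem tendsto_sub_floor_mul_div {α : ℝ} (hα₀ : 0 ≤ α) (hα₁ : α ≤ 1) :
    Tendsto (fun n : ℕ => ((n - ⌊α * n⌋₊ : ℕ) : ℝ) / n) atTop (𝓝 (1 - α)) := by
  refine (tendsto_const_nhds.sub (tendsto_floor_mul_div hα₀)).congr' ?_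
  filter_upwards [eventually_ne_atTop 0] with n hn
  have : ⌊α * n⌋₊ ≤ n := Nat.floor_le_of_le (by nlinarith)
  rw [Nat.cast_sub this, sub_div, div_self (by positivity)]

section CliqueMinusClique

variable {k d n : ℕ}

def highPart (d : ℕ) (x : Fin k) : Option (Fin (k - d)) :=
  if h : d ≤ x then some ⟨x - d, by omega⟩ else none

theorem highPart_eq_none_iff {x : Fin k} : highPart d x = none ↔ (x : ℕ) < d := by
  unfold highPart
  split_ifs <;> simp <;> omega

theorem highPart_ne_highPart {x y : Fin k} (hxy : x ≠ y) (h : d ≤ x ∨ d ≤ y) :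
    highPart d x ≠ highPart d y := by
  unfold highPart
  split_ifs <;> simp [Fin.ext_iff] at * <;> omega

def lowCompletions (d : ℕ) (x : Fin n → Fin k) : Finset (Fin n → Fin d) :=
  univ.filter fun w => ∀ t, (x t : ℕ) < d → (w t : ℕ) = x t

theorem disjoint_lowCompletions {x y : Fin n → Fin k} {t : Fin n} (hxy : x t ≠ y t)
    (hx : (x t : ℕ) < d) (hy : (y t : ℕ) < d) :
    Disjoint (lowCompletions d x) (lowCompletions d y) :=
  disjoint_left.2 fun _ hwx hwy =>
    hxy (Fin.ext (((mem_filter.1 hwx).2 t hx).symm.trans ((mem_filter.1 hwy).2 t hy)))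

theorem card_rpow_le_card_biUnion_lowCompletions {ι : Type*} [Fintype ι] {γ : ℝ}
    (hγ₀ : 0 < γ) (hγ₁ : γ ≤ 1) (hγ : (((k - d : ℕ) : ℝ) + 1) ^ γ ≤ d)
    (x : ι → Fin n → Fin k)
    (hx : ∀ i j, i ≠ j → ∃ t, x i t ≠ x j t ∧ (d ≤ x i t ∨ d ≤ x j t)) :
    (Fintype.card ι : ℝ) ^ γ ≤ #(univ.biUnion fun i => lowCompletions d (x i)) := by
  classical
  have hd : 0 < d := by exact_mod_cast (Real.one_le_rpow (by simp) hγ₀.le).trans hγ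
  have hinj : Function.Injective fun i => highPart d ∘ x i := by
    intro i j hij
    by_contra hne
    obtain ⟨t, hne', h⟩ := hx i j hne
    exact highPart_ne_highPart hne' h (congrFun hij t)
  have hP : ∀ p ∈ univ.image fun i => highPart d ∘ x i,
      ∃ f : Fin n → Fin d, cylinder p f ⊆ univ.biUnion fun i => lowCompletions d (x i) := by
    simp only [mem_image, mem_univ, true_and, forall_exists_index, forall_apply_eq_imp_iff]
    intro i
    refine ⟨fun t => if h : (x i t : ℕ) < d then ⟨_, h⟩ else ⟨0, hd⟩, fun _ hw => ?_⟩
    refine mem_biUnion.2 ⟨i, mem_univ _, mem_filter.2 ⟨mem_univ _, fun t ht => ?_⟩⟩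
    simp [hw t (highPart_eq_none_iff.2 ht), ht]
  have := card_rpow_le_card_of_cylinder_subset hγ₀ hγ₁ (by simpa using hγ) _ _ hP
  rwa [card_image_of_injective _ hinj, card_univ] at this

variable {G : Fin 2 → SimpleGraph (Fin k)}

theorem mul_rpow_le_pow_of_feasibleAtLength
    (hG1 : ∀ a b : Fin k, (G 0).Adj a b ↔ a ≠ b ∧ (d ≤ a.val ∨ d ≤ b.val))
    (hG2 : ∀ a b : Fin k, (G 1).Adj a b ↔ a ≠ b ∧ a.val < d ∧ b.val < d)
    {γ : ℝ} (hγ₀ : 0 < γ) (hγ₁ : γ ≤ 1) (hγ : (((k - d : ℕ) : ℝ) + 1) ^ γ ≤ d)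
    {m : Fin 2 → ℕ} (h : FeasibleAtLength G m n) :
    (m 0 : ℝ) * (m 1 : ℝ) ^ γ ≤ (d : ℝ) ^ n := by
  obtain ⟨E, hE⟩ := h
  set word : Fin (m 0) → Fin (m 1) → Fin n → Fin k := fun a b =>
    E (Fin.cons a (Fin.cons b finZeroElim))
  set U : Fin (m 0) → Finset (Fin n → Fin d) := fun a =>
    univ.biUnion fun b => lowCompletions d (word a b)
  have hrow : ∀ a, (m 1 : ℝ) ^ γ ≤ #(U a) := fun a => by
    simpa using card_rpow_le_card_biUnion_lowCompletions hγ₀ hγ₁ hγ (word a)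
      fun b b' hb => by
      obtain ⟨t, hne, hadj⟩ := hE 1 (Fin.cons a (Fin.cons b finZeroElim))
        (Fin.cons a (Fin.cons b' finZeroElim)) hb
      simp only [hG2, not_and, not_lt] at hadj
      exact ⟨t, hne, or_iff_not_imp_left.2 fun hx => hadj hne (not_le.1 hx)⟩
  have hdisj : (Set.univ : Set (Fin (m 0))).PairwiseDisjoint U := by
    intro a _ a' _ ha
    refine (disjoint_biUnion_left _ _ _).2 fun b _ =>
      (disjoint_biUnion_right _ _ _).2 fun b' _ => ?_
    obtain ⟨t, hne, hadj⟩ := hE 0 (Fin.cons a (Fin.cons b finZeroElim))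
      (Fin.cons a' (Fin.cons b' finZeroElim)) ha
    simp only [hG1, not_and, not_or, not_le] at hadj
    exact disjoint_lowCompletions hne (hadj hne).1 (hadj hne).2
  calc (m 0 : ℝ) * m 1 ^ γ = ∑ _a : Fin (m 0), (m 1 : ℝ) ^ γ := by simp
    _ ≤ ∑ a, (#(U a) : ℝ) := sum_le_sum fun a _ => hrow a
    _ = #(univ.biUnion U) := by rw [card_biUnion (by simpa using hdisj)]; push_cast; rfl
    _ ≤ (d : ℝ) ^ n := by exact_mod_cast (card_le_univ _).trans (by simp)

theorem FeasibleRate.div_logb_add_div_logb_le_one (hd : 2 ≤ d) (hdk : 2 * d ≤ k + 1)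
    (hG1 : ∀ a b : Fin k, (G 0).Adj a b ↔ a ≠ b ∧ (d ≤ a.val ∨ d ≤ b.val))
    (hG2 : ∀ a b : Fin k, (G 1).Adj a b ↔ a ≠ b ∧ a.val < d ∧ b.val < d)
    {R : Fin 2 → ℝ} (hR : FeasibleRate G R) :
    R 0 / Real.logb 2 d + R 1 / Real.logb 2 ((k - d + 1 : ℕ) : ℝ) ≤ 1 := by
  obtain ⟨-, m, hpos, hfeas, hlim⟩ := hR
  set K : ℝ := ((k - d + 1 : ℕ) : ℝ)
  have hK : (((k - d : ℕ) : ℝ) + 1) = K := by simp [K]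
  have hdK : (d : ℝ) ≤ K := by simp only [K]; exact_mod_cast (by omega : d ≤ k - d + 1)
  have hd₁ : (1 : ℝ) < d := by exact_mod_cast hd
  have hL₁ : 0 < Real.logb 2 d := Real.logb_pos one_lt_two hd₁
  have hL₂ : 0 < Real.logb 2 K := Real.logb_pos one_lt_two (by linarith)
  have hγ₀ : 0 < Real.logb K d := Real.logb_pos (by linarith) hd₁
  have hγ₁ : Real.logb K d ≤ 1 :=
    (Real.logb_le_logb_of_le (by linarith) (by linarith) hdK).trans_eq
      (Real.logb_self_eq_one (by linarith))
  have hγ : (((k - d : ℕ) : ℝ) + 1) ^ Real.logb K d ≤ d := by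
    rw [hK, Real.rpow_logb (by linarith) (by linarith) (by linarith)]
  have hlen : ∀ n : ℕ, Real.logb 2 (m n 0) / Real.logb 2 d +
      Real.logb 2 (m n 1) / Real.logb 2 K ≤ n := by
    intro n
    have h₀ : (0 : ℝ) < m n 0 := by exact_mod_cast hpos n 0
    have h₁ : (0 : ℝ) < m n 1 := by exact_mod_cast hpos n 1
    have h := Real.logb_le_logb_of_le one_lt_two (by positivity)
      (mul_rpow_le_pow_of_feasibleAtLength hG1 hG2 hγ₀ hγ₁ hγ (hfeas n))
    rw [Real.logb_mul h₀.ne' (by positivity), Real.logb_rpow_eq_mul_logb_of_pos h₁,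
      Real.logb_pow, show Real.logb K d = Real.logb 2 d / Real.logb 2 K by
        simp only [Real.logb]; field_simp] at h
    calc _ = (Real.logb 2 (m n 0) + Real.logb 2 d / Real.logb 2 K * Real.logb 2 (m n 1)) /
          Real.logb 2 d := by field_simp
      _ ≤ n * Real.logb 2 d / Real.logb 2 d := by gcongr
      _ = n := by field_simp
  refine le_of_tendsto (((hlim 0).div_const (Real.logb 2 d)).add ((hlim 1).div_const _)) ?_
  filter_upwards [eventually_gt_atTop 0] with n hn
  rw [div_right_comm _ (n : ℝ), div_right_comm _ (n : ℝ), ← add_div,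
    div_le_one (by positivity)]
  exact hlen n

theorem feasibleRate_timeSharing (hd : 1 ≤ d) (hdk : d ≤ k)
    (hG1 : ∀ a b : Fin k, (G 0).Adj a b ↔ a ≠ b ∧ (d ≤ a.val ∨ d ≤ b.val))
    (hG2 : ∀ a b : Fin k, (G 1).Adj a b ↔ a ≠ b ∧ a.val < d ∧ b.val < d)
    {α : ℝ} (hα : α ∈ Set.Icc (0 : ℝ) 1) :
    FeasibleRate G ![α * Real.logb 2 d, (1 - α) * Real.logb 2 ((k - d + 1 : ℕ) : ℝ)] := by
  obtain ⟨hα₀, hα₁⟩ := hα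
  have hs : ∀ n : ℕ, ⌊α * n⌋₊ ≤ n := fun n => Nat.floor_le_of_le (by nlinarith)
  refine ⟨Fin.forall_fin_two.2 ⟨?_, ?_⟩,
    fun n => ![d ^ ⌊α * n⌋₊, (k - d + 1) ^ (n - ⌊α * n⌋₊)],
    fun n => Fin.forall_fin_two.2 ⟨Nat.pow_pos (by omega), Nat.pow_pos (by omega)⟩, fun n => ?_,
    Fin.forall_fin_two.2 ⟨tendsto_logb_pow_div (tendsto_floor_mul_div hα₀) d,
      tendsto_logb_pow_div (tendsto_sub_floor_mul_div hα₀ hα₁) _⟩⟩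
  · exact mul_nonneg hα₀ (Real.logb_nonneg one_lt_two (by exact_mod_cast hd))
  · exact mul_nonneg (by linarith) (Real.logb_nonneg one_lt_two (by simp))
  -- user 1 reads the letters of `Σ_d`, user 2 the letter `σ_d` and those outside `Σ_d`
  have := feasibleAtLength_pow_add (G := G) (fun i : Fin d => Fin.castLE (by omega) i)
    (fun i j hij => by simp [hG1, Fin.ext_iff] at hij ⊢; omega)
    (fun j : Fin (k - d + 1) => ⟨d - 1 + j, by omega⟩)
    (fun i j hij => by simp [hG2, Fin.ext_iff] at hij ⊢; omega)
    ⌊α * n⌋₊ (n - ⌊α * n⌋₊)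
  rwa [Nat.add_sub_cancel' (hs n)] at this

end CliqueMinusClique

/-- Theorem 8: user 1 has the complete graph on `Σ_k` minus a clique on `Σ_d` and user 2 has the
complement graph (two distinct letters adjacent iff both lie in the first `d` letters), where
`2 ≤ d ≤ (k+1)/2`. Then for every `α ∈ [0,1]` the rate vector
`(α log₂ d, (1−α) log₂ (k−d+1))` is optimal; in particular it is feasible, and every feasible
`(R₁, R₂)` with `R₁ ≥ α log₂ d` satisfies `R₂ ≤ (1−α) log₂ (k−d+1)`. -/
theorem optimal_cliqueMinusClique_complement (k d : ℕ) (hd : 2 ≤ d) (hdk : 2 * d ≤ k + 1)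
    (G : Fin 2 → SimpleGraph (Fin k))
    (hG1 : ∀ a b : Fin k, (G 0).Adj a b ↔ a ≠ b ∧ (d ≤ a.val ∨ d ≤ b.val))
    (hG2 : ∀ a b : Fin k, (G 1).Adj a b ↔ a ≠ b ∧ a.val < d ∧ b.val < d)
    (α : ℝ) (hα : α ∈ Set.Icc (0 : ℝ) 1) :
    OptimalRate G ![α * Real.logb 2 d, (1 - α) * Real.logb 2 ((k - d + 1 : ℕ) : ℝ)] ∧
    FeasibleRate G ![α * Real.logb 2 d, (1 - α) * Real.logb 2 ((k - d + 1 : ℕ) : ℝ)] ∧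
    (∀ R : Fin 2 → ℝ, FeasibleRate G R → α * Real.logb 2 d ≤ R 0 →
      R 1 ≤ (1 - α) * Real.logb 2 ((k - d + 1 : ℕ) : ℝ)) := by
  have hL₁ : 0 < Real.logb 2 d := Real.logb_pos one_lt_two (by exact_mod_cast hd)
  have hL₂ : 0 < Real.logb 2 ((k - d + 1 : ℕ) : ℝ) :=
    Real.logb_pos one_lt_two (by simp; omega)
  have hbound := fun R (hR : FeasibleRate G R) => hR.div_logb_add_div_logb_le_one hd hdk hG1 hG2
  have hfeas := feasibleRate_timeSharing (by omega) (by omega) hG1 hG2 hα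
  have hconverse : ∀ R : Fin 2 → ℝ, FeasibleRate G R → α * Real.logb 2 d ≤ R 0 →
      R 1 ≤ (1 - α) * Real.logb 2 ((k - d + 1 : ℕ) : ℝ) := by
    intro R hR h₀
    rw [← le_div_iff₀ hL₁] at h₀
    rw [← div_le_iff₀ hL₂]
    linarith [hbound R hR]
  refine ⟨⟨hfeas, ?_, fun ⟨_, hlt, hR⟩ => hlt.not_ge (hconverse _ hR le_rfl)⟩, hfeas, hconverse⟩
  rintro ⟨R₁, hlt, hR⟩
  have h := hbound _ hR
  simp only [Matrix.cons_val_zero, Matrix.cons_val_one, mul_div_cancel_right₀ _ hL₂.ne']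
    at h hlt
  rw [← lt_div_iff₀ hL₁] at hlt
  linarith
end

section
/- Let 2 ≤ d ≤ k, let G_1 be the complete graph on Σ_k minus a clique on Σ_d, and let G_2, …, G_r be arbitrary confusion graphs on Σ_k. Then for every α ∈ [0,1], every feasible rate vector of the form (α·log₂ d, R_2, …, R_r) satisfies Σ_{i=2}^{r} R_i ≤ (1−α)·log₂ k. -/
open Finset

theorem ConvexOn.map_add_sub_map_le_map_add_sub_map {s : Set ℝ} {f : ℝ → ℝ}
    (hf : ConvexOn ℝ s f) {x y h : ℝ} (hx : x ∈ s) (hyh : y + h ∈ s) (hxy : x ≤ y)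
    (hh : 0 ≤ h) : f (x + h) - f x ≤ f (y + h) - f y := by
  rcases (add_nonneg (sub_nonneg.2 hxy) hh).eq_or_lt with hD | hD
  · obtain rfl : h = 0 := by linarith
    obtain rfl : x = y := by linarith
    rfl
  -- `x + h` and `y` split the segment `[x, y + h]` in mirrored ratios.
  set a := (y - x) / (y - x + h)
  set b := h / (y - x + h)
  have ha : 0 ≤ a := div_nonneg (sub_nonneg.2 hxy) hD.le
  have hb : 0 ≤ b := div_nonneg hh hD.le
  have hab : a + b = 1 := by simp only [a, b]; field_simp
  have hba : b + a = 1 := by linarith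
  have h₁ := hf.2 hx hyh ha hb hab
  have h₂ := hf.2 hx hyh hb ha hba
  have e₁ : a • x + b • (y + h) = x + h := by simp only [a, b, smul_eq_mul]; field_simp; ring
  have e₂ : b • x + a • (y + h) = y := by simp only [a, b, smul_eq_mul]; field_simp; ring
  rw [e₁] at h₁
  rw [e₂] at h₂
  simp only [smul_eq_mul] at h₁ h₂
  linear_combination h₁ + h₂ + (f x + f (y + h)) * hab

theorem ConvexOn.sum_map_add_map_card_mul_le {ι : Type*} [DecidableEq ι] {f : ℝ → ℝ}
    (hf : ConvexOn ℝ (Set.Ici 0) f) {a : ℝ} (ha : 0 ≤ a) (T : Finset ι) {M : ι → ℝ}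
    (hM : ∀ j ∈ T, a ≤ M j) :
    ∑ j ∈ T, f (M j) + f (#T * a) ≤ f (∑ j ∈ T, M j) + #T * f a := by
  induction T using Finset.induction_on with
  | empty => simp
  | @insert j₀ T hj₀ ih =>
    rw [Finset.forall_mem_insert] at hM
    obtain ⟨hM₀, hM⟩ := hM
    rw [sum_insert hj₀, sum_insert hj₀, card_insert_of_notMem hj₀, Nat.cast_succ, add_mul,
      one_mul]
    set S := ∑ j ∈ T, M j
    have hTa : #T * a ≤ S := by simpa [mul_comm] using Finset.sum_le_sum hM
    have hS : 0 ≤ S := (by positivity : (0 : ℝ) ≤ #T * a).trans hTa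
    have inc₁ := hf.map_add_sub_map_le_map_add_sub_map (Set.mem_Ici.2 ha)
      (Set.mem_Ici.2 (by linarith)) hM₀ hS
    have inc₂ := hf.map_add_sub_map_le_map_add_sub_map (Set.mem_Ici.2 (by positivity))
      (Set.mem_Ici.2 (by linarith)) hTa ha
    rw [add_comm a S] at inc₁
    linarith [ih hM]

section LowShadow

variable {α : Type*} [Fintype α] [DecidableEq α] {n : ℕ}

def lowShadow (L : Finset α) (C : Finset (Fin n → α)) : Finset (Fin n → α) :=
  {y | (∀ t, y t ∈ L) ∧ ∃ x ∈ C, ∀ t, x t ∈ L → y t = x t}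

def tailsWithHead (S : Finset (Fin (n + 1) → α)) (a : α) : Finset (Fin n → α) :=
  {z | Fin.cons a z ∈ S}

def highTails (L : Finset α) (S : Finset (Fin (n + 1) → α)) : Finset (Fin n → α) :=
  {z | ∃ b ∉ L, Fin.cons b z ∈ S}

variable {L : Finset α}

@[simp]
theorem mem_lowShadow {C : Finset (Fin n → α)} {y : Fin n → α} :
    y ∈ lowShadow L C ↔ (∀ t, y t ∈ L) ∧ ∃ x ∈ C, ∀ t, x t ∈ L → y t = x t := by
  simp [lowShadow]

@[simp]
theorem mem_tailsWithHead {S : Finset (Fin (n + 1) → α)} {a : α} {z : Fin n → α} :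
    z ∈ tailsWithHead S a ↔ Fin.cons a z ∈ S := by
  simp [tailsWithHead]

@[simp]
theorem mem_highTails {S : Finset (Fin (n + 1) → α)} {z : Fin n → α} :
    z ∈ highTails L S ↔ ∃ b ∉ L, Fin.cons b z ∈ S := by
  simp [highTails]

theorem lowShadow_mono {C C' : Finset (Fin n → α)} (h : C ⊆ C') :
    lowShadow L C ⊆ lowShadow L C' := by
  intro y
  simp only [mem_lowShadow]
  exact fun ⟨hy, x, hx, hxy⟩ => ⟨hy, x, h hx, hxy⟩

theorem lowShadow_subset_piFinset (C : Finset (Fin n → α)) :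
    lowShadow L C ⊆ Fintype.piFinset fun _ => L := by
  intro y hy
  simpa using (mem_lowShadow.1 hy).1

theorem disjoint_lowShadow {C C' : Finset (Fin n → α)}
    (h : ∀ x ∈ C, ∀ x' ∈ C', ∃ t, x t ∈ L ∧ x' t ∈ L ∧ x t ≠ x' t) :
    Disjoint (lowShadow L C) (lowShadow L C') := by
  refine Finset.disjoint_left.2 fun y hy hy' => ?_
  obtain ⟨-, x, hx, hxy⟩ := mem_lowShadow.1 hy
  obtain ⟨-, x', hx', hxy'⟩ := mem_lowShadow.1 hy'
  obtain ⟨t, ht, ht', hne⟩ := h x hx x' hx'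
  exact hne ((hxy t ht).symm.trans (hxy' t ht'))

theorem card_eq_sum_card_tailsWithHead (S : Finset (Fin (n + 1) → α)) :
    #S = ∑ a, #(tailsWithHead S a) := by
  rw [card_eq_sum_card_fiberwise (f := fun x => x 0) (t := univ) fun _ _ => mem_univ _]
  refine sum_congr rfl fun a _ => card_nbij' Fin.tail (fun z => Fin.cons a z) ?_ ?_ ?_ ?_
  · intro x hx
    simp only [coe_filter, Set.mem_ofPred_eq] at hx
    simpa [← hx.2] using hx.1
  · intro z hz
    simpa using hz
  · intro x hx
    simp only [coe_filter, Set.mem_ofPred_eq] at hx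
    simp [← hx.2]
  · intro z _
    simp

theorem tailsWithHead_lowShadow_of_notMem (C : Finset (Fin (n + 1) → α)) {a : α}
    (ha : a ∉ L) :
    tailsWithHead (lowShadow L C) a = ∅ := by
  ext z
  simp only [mem_tailsWithHead, mem_lowShadow, Finset.notMem_empty, iff_false]
  exact fun h => ha (by simpa using h.1 0)

theorem lowShadow_tailsWithHead_union_subset (C : Finset (Fin (n + 1) → α)) {a : α}
    (ha : a ∈ L) :
    lowShadow L (tailsWithHead C a) ∪ lowShadow L (highTails L C) ⊆
      tailsWithHead (lowShadow L C) a := by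
  intro z hz
  simp only [mem_union, mem_lowShadow, mem_tailsWithHead, mem_highTails] at hz ⊢
  constructor
  · intro t
    cases t using Fin.cases with
    | zero => simpa using ha
    | succ t => rcases hz with ⟨hz, -⟩ | ⟨hz, -⟩ <;> simpa using hz t
  · rcases hz with ⟨-, w, hw, hwz⟩ | ⟨-, w, ⟨b, hb, hw⟩, hwz⟩
    · refine ⟨_, hw, fun t => ?_⟩
      cases t using Fin.cases with
      | zero => simp
      | succ t => simpa using hwz t
    · refine ⟨_, hw, fun t => ?_⟩
      cases t using Fin.cases with
      | zero => simp [hb]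
      | succ t => simpa using hwz t

end LowShadow

section LowShadowCard

variable {α : Type*} [Fintype α] [DecidableEq α] {L : Finset α}

theorem card_le_card_lowShadow_rpow {c : ℝ} (hc : 1 ≤ c)
    (hL : (#L : ℝ) ^ c = Fintype.card α) :
    ∀ {n : ℕ} (C : Finset (Fin n → α)), (#C : ℝ) ≤ (#(lowShadow L C) : ℝ) ^ c
  | 0, C => by
    rcases C.eq_empty_or_nonempty with rfl | ⟨x, hx⟩
    · simpa using Real.rpow_nonneg (Nat.cast_nonneg _) c
    have hxV : x ∈ lowShadow L C := mem_lowShadow.2 ⟨finZeroElim, x, hx, finZeroElim⟩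
    calc (#C : ℝ) ≤ 1 := by exact_mod_cast card_le_one.2 fun _ _ _ _ => Subsingleton.elim _ _
      _ ≤ _ := Real.one_le_rpow (by exact_mod_cast card_pos.2 ⟨x, hxV⟩) (by linarith)
  | n + 1, C => by
    set W : α → ℝ := fun a => (#(tailsWithHead (lowShadow L C) a) : ℝ)
    set u : ℝ := (#(lowShadow L (highTails L C)) : ℝ)
    have hc₀ : 0 ≤ c := by linarith
    have hsub := fun a (ha : a ∈ L) => lowShadow_tailsWithHead_union_subset (L := L) C ha
    have hlow : ∀ a ∈ L, (#(tailsWithHead C a) : ℝ) ≤ W a ^ c := fun a ha =>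
      (card_le_card_lowShadow_rpow hc hL _).trans <| Real.rpow_le_rpow (Nat.cast_nonneg _)
        (Nat.cast_le.2 (card_le_card (subset_union_left.trans (hsub a ha)))) hc₀
    have hhigh : ∀ a ∈ Lᶜ, (#(tailsWithHead C a) : ℝ) ≤ u ^ c := fun a ha =>
      have hD : tailsWithHead C a ⊆ highTails L C := fun z hz =>
        mem_highTails.2 ⟨a, mem_compl.1 ha, mem_tailsWithHead.1 hz⟩
      (card_le_card_lowShadow_rpow hc hL _).trans <| Real.rpow_le_rpow (Nat.cast_nonneg _)
        (Nat.cast_le.2 (card_le_card (lowShadow_mono hD))) hc₀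
    have huW : ∀ a ∈ L, u ≤ W a := fun a ha =>
      Nat.cast_le.2 (card_le_card (subset_union_right.trans (hsub a ha)))
    -- The `|α| - |L|` high fibers are paid for by convexity, as `(|L| u) ^ c = |α| u ^ c`.
    have hconv := (convexOn_rpow hc).sum_map_add_map_card_mul_le (Nat.cast_nonneg _) L huW
    rw [Real.mul_rpow (Nat.cast_nonneg _) (Nat.cast_nonneg _), hL] at hconv
    have hC : (#C : ℝ) = ∑ a ∈ L, (#(tailsWithHead C a) : ℝ) +
        ∑ a ∈ Lᶜ, (#(tailsWithHead C a) : ℝ) := by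
      rw [card_eq_sum_card_tailsWithHead, Nat.cast_sum, sum_add_sum_compl]
    have hV : (#(lowShadow L C) : ℝ) = ∑ a ∈ L, W a := by
      rw [card_eq_sum_card_tailsWithHead, Nat.cast_sum, ← sum_add_sum_compl L,
        sum_eq_zero (s := Lᶜ) fun a ha => by
          rw [tailsWithHead_lowShadow_of_notMem C (mem_compl.1 ha), card_empty, Nat.cast_zero],
        add_zero]
    have hLc : (#Lᶜ : ℝ) = Fintype.card α - #L := by
      rw [card_compl, Nat.cast_sub (card_le_univ L)]
    calc (#C : ℝ) ≤ ∑ a ∈ L, W a ^ c + #Lᶜ * u ^ c := by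
          rw [hC, ← nsmul_eq_mul, ← sum_const]
          exact add_le_add (sum_le_sum hlow) (sum_le_sum hhigh)
      _ ≤ (∑ a ∈ L, W a) ^ c := by rw [hLc]; linarith
      _ = _ := by rw [hV]

end LowShadowCard

theorem card_mul_rpow_inv_le_card_pow {α β : Type*} [Fintype α] [DecidableEq α] [Fintype β]
    {L : Finset α} {c : ℝ} (hc : 1 ≤ c) (hL : (#L : ℝ) ^ c = Fintype.card α) {n : ℕ}
    (C : β → Finset (Fin n → α)) {N : ℝ} (hN₀ : 0 ≤ N) (hN : ∀ b, N ≤ #(C b))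
    (hsep : Pairwise fun b b' =>
      ∀ x ∈ C b, ∀ x' ∈ C b', ∃ t, x t ∈ L ∧ x' t ∈ L ∧ x t ≠ x' t) :
    Fintype.card β * N ^ c⁻¹ ≤ (#L : ℝ) ^ n := by
  have hshadow : ∀ b, N ^ c⁻¹ ≤ #(lowShadow L (C b)) := fun b =>
    (Real.rpow_inv_le_iff_of_pos hN₀ (Nat.cast_nonneg _) (by linarith)).2
      ((hN b).trans (card_le_card_lowShadow_rpow hc hL (C b)))
  have hdisj : (↑(univ : Finset β) : Set β).PairwiseDisjoint fun b => lowShadow L (C b) :=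
    fun b _ b' _ hbb' => disjoint_lowShadow (hsep hbb')
  have hunion : univ.biUnion (fun b => lowShadow L (C b)) ⊆ Fintype.piFinset fun _ => L :=
    biUnion_subset.2 fun b _ => lowShadow_subset_piFinset (C b)
  calc Fintype.card β * N ^ c⁻¹ = ∑ _b : β, N ^ c⁻¹ := by simp
    _ ≤ ∑ b, (#(lowShadow L (C b)) : ℝ) := sum_le_sum fun b _ => hshadow b
    _ = #(univ.biUnion fun b => lowShadow L (C b)) := by rw [card_biUnion hdisj, Nat.cast_sum]
    _ ≤ #(Fintype.piFinset fun _ : Fin n => L) := by exact_mod_cast card_le_card hunion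
    _ = (#L : ℝ) ^ n := by simp

theorem FeasibleAtLength.logb_add_logb_prod_le {k r n : ℕ} {G : Fin r → SimpleGraph (Fin k)}
    {m : Fin r → ℕ} (hfeas : FeasibleAtLength G m n) (hm : ∀ i, 0 < m i) {i₀ : Fin r}
    {L : Finset (Fin k)} (hL : 2 ≤ #L)
    (hG : ∀ a b, a ≠ b → ¬ (G i₀).Adj a b → a ∈ L ∧ b ∈ L) :
    Real.logb #L (m i₀) + Real.logb k (∏ i ∈ univ.erase i₀, m i) ≤ n := by
  obtain ⟨E, hE⟩ := hfeas
  rw [← Nat.cast_prod]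
  have hd : (1 : ℝ) < #L := by exact_mod_cast hL
  have hk : (#L : ℝ) ≤ k := by exact_mod_cast (card_le_univ L).trans_eq (Fintype.card_fin k)
  set c := Real.logb #L k
  have hc : 1 ≤ c := (Real.le_logb_iff_rpow_le hd (by linarith)).2 (by simpa using hk)
  have hLc : (#L : ℝ) ^ c = Fintype.card (Fin k) := by
    rw [Fintype.card_fin]
    exact Real.rpow_logb (by linarith) hd.ne' (by linarith)
  have hEinj : Function.Injective E := fun a b hab => by
    by_contra hne
    obtain ⟨i, hi⟩ := Function.ne_iff.1 hne
    obtain ⟨t, ht, -⟩ := hE i a b hi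
    exact ht (congrFun hab t)
  set F := ∏ i ∈ univ.erase i₀, m i
  let Cl : Fin (m i₀) → Finset (Fin n → Fin k) := fun a₀ =>
    (univ.filter fun b => b i₀ = a₀).image E
  have hcard : ∀ a₀, (F : ℝ) ≤ #(Cl a₀) := fun a₀ => by
    have := Fintype.card_filter_piFinset_eq_of_mem (fun i => (univ : Finset (Fin (m i)))) i₀
      (mem_univ a₀)
    simp only [Fintype.piFinset_univ, card_univ, Fintype.card_fin] at this
    simp only [Cl, card_image_of_injective _ hEinj, this, F]
    rfl
  have hsep : Pairwise fun a₀ a₀' =>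
      ∀ x ∈ Cl a₀, ∀ x' ∈ Cl a₀', ∃ t, x t ∈ L ∧ x' t ∈ L ∧ x t ≠ x' t := by
    intro a₀ a₀' hne x hx x' hx'
    simp only [Cl, mem_image, mem_filter, mem_univ, true_and] at hx hx'
    obtain ⟨b, rfl, rfl⟩ := hx
    obtain ⟨b', rfl, rfl⟩ := hx'
    obtain ⟨t, hne, hadj⟩ := hE i₀ b b' hne
    exact ⟨t, (hG _ _ hne hadj).1, (hG _ _ hne hadj).2, hne⟩
  have key := card_mul_rpow_inv_le_card_pow hc hLc Cl (Nat.cast_nonneg F) hcard hsep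
  rw [Fintype.card_fin] at key
  have hF : (0 : ℝ) < F := by exact_mod_cast prod_pos fun i _ => hm i
  have hm₀ : (0 : ℝ) < m i₀ := by exact_mod_cast hm i₀
  have hlog := Real.logb_le_logb_of_le hd (by positivity) key
  rw [Real.logb_mul hm₀.ne' (by positivity), Real.logb_rpow_eq_mul_logb_of_pos hF,
    Real.logb_pow, Real.logb_self_eq_one hd] at hlog
  have hbase : c⁻¹ * Real.logb #L F = Real.logb k F := by
    have := Real.log_pos hd
    simp only [c, Real.logb]
    field_simp
  linarith

open Filter Topology in
theorem tendsto_logb_div_of_tendsto_logb_two_div {b R : ℝ} {x : ℕ → ℝ}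
    (h : Tendsto (fun n : ℕ => Real.logb 2 (x n) / n) atTop (𝓝 R)) :
    Tendsto (fun n : ℕ => Real.logb b (x n) / n) atTop (𝓝 (R / Real.logb 2 b)) := by
  refine (h.div_const _).congr fun n => ?_
  rw [div_right_comm, div_eq_mul_inv _ (Real.logb 2 b), Real.inv_logb, mul_comm, Real.mul_logb]
    <;> norm_num

open Filter Topology in
theorem FeasibleRate.div_logb_add_sum_div_logb_le_one {k r : ℕ}
    {G : Fin r → SimpleGraph (Fin k)} {R : Fin r → ℝ} (hR : FeasibleRate G R) {i₀ : Fin r}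
    {L : Finset (Fin k)} (hL : 2 ≤ #L)
    (hG : ∀ a b, a ≠ b → ¬ (G i₀).Adj a b → a ∈ L ∧ b ∈ L) :
    R i₀ / Real.logb 2 #L + (∑ i ∈ univ.erase i₀, R i) / Real.logb 2 k ≤ 1 := by
  obtain ⟨-, m, hm, hfeas, hlim⟩ := hR
  have hrest : Tendsto (fun n : ℕ => Real.logb k (∏ i ∈ univ.erase i₀, (m n i : ℝ)) / n)
      atTop (𝓝 ((∑ i ∈ univ.erase i₀, R i) / Real.logb 2 k)) := by
    rw [sum_div]
    refine (tendsto_finsetSum _ fun i _ => tendsto_logb_div_of_tendsto_logb_two_div (hlim i)).congr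
      fun n => ?_
    rw [Real.logb_prod _ _ fun i _ => by exact_mod_cast (hm n i).ne', sum_div]
  refine le_of_tendsto' ((tendsto_logb_div_of_tendsto_logb_two_div (hlim i₀)).add hrest)
    fun n => ?_
  rw [← add_div]
  exact div_le_one_of_le₀ ((hfeas n).logb_add_logb_prod_le (hm n) hL hG) n.cast_nonneg

theorem sum_rest_le_of_cliqueMinusClique_general (k d r : ℕ) (hr : 0 < r) (hd : 2 ≤ d) (hdk : d ≤ k)
    (G : Fin r → SimpleGraph (Fin k))
    (hG1 : ∀ a b : Fin k, (G ⟨0, hr⟩).Adj a b ↔ a ≠ b ∧ (d ≤ a.val ∨ d ≤ b.val))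
    (α : ℝ)
    (R : Fin r → ℝ) (hR : FeasibleRate G R) (hR0 : R ⟨0, hr⟩ = α * Real.logb 2 d) :
    ∑ i ∈ Finset.univ.erase (⟨0, hr⟩ : Fin r), R i ≤ (1 - α) * Real.logb 2 k := by
  set L : Finset (Fin k) := {a | (a : ℕ) < d}
  have hL : #L = d := by simp [L, Fin.card_filter_val_lt, hdk]
  have hG : ∀ a b, a ≠ b → ¬ (G ⟨0, hr⟩).Adj a b → a ∈ L ∧ b ∈ L := by
    intro a b hab hadj
    simp only [hG1, not_and, not_or, not_le] at hadj
    simpa [L] using hadj hab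
  have hle := hR.div_logb_add_sum_div_logb_le_one (hL ▸ hd) hG
  have hlogd : 0 < Real.logb 2 d := Real.logb_pos one_lt_two (by exact_mod_cast hd)
  have hlogk : 0 < Real.logb 2 k := Real.logb_pos one_lt_two (by exact_mod_cast hd.trans hdk)
  rw [hL, hR0, mul_div_assoc, div_self hlogd.ne', mul_one, ← le_sub_iff_add_le',
    div_le_iff₀ hlogk] at hle
  exact hle

/-- Corollary 13: if user 1 has the complete graph on `Σ_k` minus a clique on `Σ_d` and the other
users have arbitrary confusion graphs, then any feasible rate vector `(α log₂ d, R₂, …, R_r)`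
with `α ∈ [0,1]` satisfies `∑_{i=2}^r R i ≤ (1−α) log₂ k`. -/
theorem sum_rest_le_of_cliqueMinusClique (k d r : ℕ) (hr : 0 < r) (hd : 2 ≤ d) (hdk : d ≤ k)
    (G : Fin r → SimpleGraph (Fin k))
    (hG1 : ∀ a b : Fin k, (G ⟨0, hr⟩).Adj a b ↔ a ≠ b ∧ (d ≤ a.val ∨ d ≤ b.val))
    (α : ℝ) (hα : α ∈ Set.Icc (0 : ℝ) 1)
    (R : Fin r → ℝ) (hR : FeasibleRate G R) (hR0 : R ⟨0, hr⟩ = α * Real.logb 2 d) :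
    ∑ i ∈ Finset.univ.erase (⟨0, hr⟩ : Fin r), R i ≤ (1 - α) * Real.logb 2 k :=
  sum_rest_le_of_cliqueMinusClique_general k d r hr hd hdk G hG1 α R hR hR0
end
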